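/- Let H_α be the Hermitian adjacency matrix of an oriented cycle on n vertices with edge weights of modulus 1, and let w be the product of the weights around the cycle (following a fixed orientation). Then det(H_α) = -2·det(A(P_{n-2})) + 2·(-1)^{n+1}·Re(w), where A(P_{n-2}) is the adjacency matrix of the path on n-2 vertices. -/

import Mathlib

/-- The Hermitian adjacency matrix of a cycle whose arc from `j` to `j+1` (mod `n`)
has weight `w j`, the reverse arc carrying the conjugate weight. -/
def cycleHw (n : ℕ) (w : Fin n → ℂ) : Matrix (Fin n) (Fin n) ℂ :=
  fun j k =>
    (if (k : ℕ) = ((j : ℕ) + 1) % n then w j else 0) +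
    (if (j : ℕ) = ((k : ℕ) + 1) % n then (starRingEnd ℂ) (w k) else 0)

/-- The adjacency matrix of the path graph on `n` vertices, over `ℂ`. -/
def pathAdj (n : ℕ) : Matrix (Fin n) (Fin n) ℂ :=
  fun i j => if (i : ℕ) + 1 = j ∨ (j : ℕ) + 1 = i then 1 else 0

open Matrix Finset

def cycC (m : ℕ) (W : ℂ) : Matrix (Fin (m+3)) (Fin (m+3)) ℂ :=
  fun j k => pathAdj (m+3) j k + (if (j:ℕ) = m+2 ∧ (k:ℕ) = 0 then W else 0)
    + (if (j:ℕ) = 0 ∧ (k:ℕ) = m+2 then (starRingEnd ℂ) W else 0)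

def e0 (m : ℕ) : Fin (m+3) → ℂ := fun k => if (k:ℕ) = 0 then 1 else 0
def eL (m : ℕ) : Fin (m+3) → ℂ := fun k => if (k:ℕ) = m+2 then 1 else 0

lemma succAbove_val {n : ℕ} (p : Fin (n+1)) (i : Fin n) :
    ((p.succAbove i : Fin (n+1)) : ℕ) = if (i:ℕ) < (p:ℕ) then (i:ℕ) else (i:ℕ)+1 := by
  rw [Fin.succAbove]
  simp only [Fin.lt_def, Fin.coe_castSucc]
  split_ifs <;> rfl

lemma det_lower {k : ℕ} (M : Matrix (Fin k) (Fin k) ℂ)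
    (h : ∀ i j : Fin k, (i:ℕ) < (j:ℕ) → M i j = 0) (hd : ∀ i, M i i = 1) : M.det = 1 := by
  rw [Matrix.det_of_lowerTriangular M (fun i j hij => h i j hij)]
  simp [hd]

lemma det_upper {k : ℕ} (M : Matrix (Fin k) (Fin k) ℂ)
    (h : ∀ i j : Fin k, (j:ℕ) < (i:ℕ) → M i j = 0) (hd : ∀ i, M i i = 1) : M.det = 1 := by
  rw [Matrix.det_of_upperTriangular (M := M) (fun i j hij => h i j hij)]
  simp [hd]

lemma path_step (m : ℕ) : (pathAdj (m+2)).det = -(pathAdj m).det := by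
  rw [show m+2 = (m+1)+1 from rfl, Matrix.det_succ_row_zero]
  rw [Fintype.sum_eq_single (1 : Fin (m+2))]
  · have h1 : ((1 : Fin (m+2)) : ℕ) = 1 := rfl
    rw [Matrix.det_succ_column_zero]
    rw [Fintype.sum_eq_single (0 : Fin (m+1))]
    · have : ((pathAdj (m + 2)).submatrix Fin.succ (Fin.succAbove 1)).submatrix
          (Fin.succAbove 0) Fin.succ = pathAdj m := by
        ext i j
        simp only [Matrix.submatrix_apply, pathAdj, succAbove_val, Fin.val_succ, h1]
        split_ifs <;> simp_all <;> omega
      rw [this]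
      simp [pathAdj, succAbove_val, h1]
    · intro b hb
      have hb' : (b:ℕ) ≠ 0 := fun h => hb (Fin.ext h)
      simp only [Matrix.submatrix_apply, pathAdj, succAbove_val, h1, Fin.val_succ]
      simp_all
  · intro b hb
    have : (b:ℕ) ≠ 1 := fun h => hb (Fin.ext h)
    simp [pathAdj]
    omega

lemma hD1 (m : ℕ) : ((pathAdj (m+3)).updateRow (Fin.last (m+2)) (e0 m)).det = (-1:ℂ)^m := by
  rw [Matrix.det_succ_row _ (Fin.last (m+2))]
  rw [Fintype.sum_eq_single (0 : Fin (m+3))]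
  · rw [Matrix.updateRow_self]
    have h1 : (((pathAdj (m+3)).updateRow (Fin.last (m+2)) (e0 m)).submatrix
        (Fin.last (m+2)).succAbove (Fin.succAbove 0) |>.det) = 1 := by
      apply det_lower
      · intro i j hij
        rw [Matrix.submatrix_apply, Matrix.updateRow_ne (by
          apply Fin.ne_of_val_ne; rw [succAbove_val]; simp [Fin.val_last]; omega)]
        simp only [pathAdj, succAbove_val, Fin.val_last, Fin.val_zero, Nat.not_lt_zero, if_false]
        split_ifs <;> first | rfl | omega
      · intro i
        rw [Matrix.submatrix_apply, Matrix.updateRow_ne (by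
          apply Fin.ne_of_val_ne; rw [succAbove_val]; simp [Fin.val_last]; omega)]
        simp only [pathAdj, succAbove_val, Fin.val_last, Fin.val_zero, Nat.not_lt_zero, if_false]
        split_ifs <;> first | rfl | omega
    rw [h1]
    simp [e0, Fin.val_last, pow_succ]
  · intro b hb
    have hbv : (b:ℕ) ≠ 0 := fun h => hb (Fin.ext h)
    rw [Matrix.updateRow_self]
    simp [e0, hbv]

lemma hD2 (m : ℕ) : ((pathAdj (m+3)).updateRow 0 (eL m)).det = (-1:ℂ)^m := by
  rw [Matrix.det_succ_row_zero]
  rw [Fintype.sum_eq_single (Fin.last (m+2))]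
  · rw [Matrix.updateRow_self]
    have h1 : (((pathAdj (m+3)).updateRow 0 (eL m)).submatrix
        Fin.succ (Fin.last (m+2)).succAbove).det = 1 := by
      apply det_upper
      · intro i j hij
        rw [Matrix.submatrix_apply, Matrix.updateRow_ne (Fin.succ_ne_zero i)]
        simp only [pathAdj, succAbove_val, Fin.val_last, Fin.val_succ]
        split_ifs <;> first | rfl | omega
      · intro i
        rw [Matrix.submatrix_apply, Matrix.updateRow_ne (Fin.succ_ne_zero i)]
        simp only [pathAdj, succAbove_val, Fin.val_last, Fin.val_succ]
        split_ifs <;> first | rfl | omega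
    rw [h1]
    simp [eL, Fin.val_last, pow_succ]
  · intro b hb
    have hbv : (b:ℕ) ≠ m+2 := fun h => hb (Fin.ext (by simp [Fin.val_last, h]))
    rw [Matrix.updateRow_self]
    simp [eL, hbv]

lemma hD3 (m : ℕ) : (((pathAdj (m+3)).updateRow 0 (eL m)).updateRow (Fin.last (m+2)) (e0 m)).det
    = -(pathAdj (m+1)).det := by
  rw [Matrix.det_succ_row_zero]
  rw [Fintype.sum_eq_single (Fin.last (m+2))]
  · rw [Matrix.updateRow_ne (by apply Fin.ne_of_val_ne; simp [Fin.val_last]),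
      Matrix.updateRow_self]
    set F := (((pathAdj (m+3)).updateRow 0 (eL m)).updateRow (Fin.last (m+2)) (e0 m)).submatrix
        Fin.succ (Fin.last (m+2)).succAbove with hF
    have h2 : F.det = (-1:ℂ)^(m+1) * (pathAdj (m+1)).det := by
      rw [Matrix.det_succ_row F (Fin.last (m+1))]
      rw [Fintype.sum_eq_single (0 : Fin (m+2))]
      · have hrow : F (Fin.last (m+1)) 0 = 1 := by
          rw [hF, Matrix.submatrix_apply]
          rw [show (Fin.succ (Fin.last (m+1))) = Fin.last (m+2) from by
            apply Fin.ext; simp [Fin.val_last]]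
          rw [Matrix.updateRow_self]
          simp [e0, succAbove_val, Fin.val_last]
        have h3 : (F.submatrix (Fin.last (m+1)).succAbove (Fin.succAbove 0)).det
            = (pathAdj (m+1)).det := by
          congr 1
          ext i j
          rw [Matrix.submatrix_apply, hF, Matrix.submatrix_apply]
          have hz : ((0 : Fin (m+2)) : ℕ) = 0 := rfl
          rw [Matrix.updateRow_ne (show _ ≠ Fin.last (m+2) by
            rw [← Fin.succ_last]
            exact fun h => Fin.succAbove_ne _ i (Fin.succ_injective _ h))]
          rw [Matrix.updateRow_ne (Fin.succ_ne_zero _)]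
          simp only [pathAdj, succAbove_val, Fin.val_last, Fin.val_succ, Fin.coe_castSucc, hz]
          split_ifs <;> first | rfl | omega
        rw [hrow, h3]
        simp [Fin.val_last]
      · intro b hb
        have hbv : (b:ℕ) ≠ 0 := fun h => hb (Fin.ext h)
        have : F (Fin.last (m+1)) b = 0 := by
          rw [hF, Matrix.submatrix_apply]
          rw [show (Fin.succ (Fin.last (m+1))) = Fin.last (m+2) from by
            apply Fin.ext; simp [Fin.val_last]]
          rw [Matrix.updateRow_self]
          simp [e0, succAbove_val, Fin.val_last, hbv]
        rw [this]
        ring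
    rw [h2]
    simp only [eL, Fin.val_last, if_pos rfl, ite_true, mul_one]
    ring_nf
    rw [Even.neg_one_pow ⟨m, by ring⟩, mul_one]
  · intro b hb
    have hbv : (b:ℕ) ≠ m+2 := fun h => hb (Fin.ext (by simp [Fin.val_last, h]))
    rw [Matrix.updateRow_ne (by apply Fin.ne_of_val_ne; simp [Fin.val_last]),
      Matrix.updateRow_self]
    simp [eL, hbv]

lemma updRow_comm (m : ℕ) (A : Matrix (Fin (m+3)) (Fin (m+3)) ℂ) (r s : Fin (m+3) → ℂ) :
    (A.updateRow 0 r).updateRow (Fin.last (m+2)) s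
      = (A.updateRow (Fin.last (m+2)) s).updateRow 0 r := by
  have h0 : (0 : Fin (m+3)) ≠ Fin.last (m+2) := by
    apply Fin.ne_of_val_ne; simp [Fin.val_last]
  ext j k
  simp only [Matrix.updateRow_apply]
  split_ifs with h1 h2 <;> simp_all

lemma detC (m : ℕ) (W : ℂ) (hW : (starRingEnd ℂ) W * W = 1) :
    (cycC m W).det = -2 * (pathAdj (m+1)).det + (-1:ℂ)^m * (W + (starRingEnd ℂ) W) := by
  have h0L : (Fin.last (m+2)) ≠ (0 : Fin (m+3)) := by
    apply Fin.ne_of_val_ne; simp [Fin.val_last]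
  have hCrw : cycC m W = ((pathAdj (m+3)).updateRow 0
      (pathAdj (m+3) 0 + (starRingEnd ℂ) W • eL m)).updateRow (Fin.last (m+2))
      (pathAdj (m+3) (Fin.last (m+2)) + W • e0 m) := by
    ext j k
    rcases eq_or_ne j (Fin.last (m+2)) with rfl | hjl
    · rw [Matrix.updateRow_self]
      simp only [cycC, pathAdj, Pi.add_apply, Pi.smul_apply, smul_eq_mul, e0, Fin.val_last]
      split_ifs <;> simp_all <;> ring
    · rw [Matrix.updateRow_ne hjl]
      have hjlv : (j:ℕ) ≠ m+2 := fun h => hjl (Fin.ext (by simp [Fin.val_last, h]))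
      rcases eq_or_ne j 0 with rfl | hj0
      · rw [Matrix.updateRow_self]
        simp only [cycC, pathAdj, Pi.add_apply, Pi.smul_apply, smul_eq_mul, eL,
          Fin.val_zero]
        split_ifs <;> simp_all <;> ring
      · rw [Matrix.updateRow_ne hj0]
        have hj0v : (j:ℕ) ≠ 0 := fun h => hj0 (Fin.ext h)
        simp only [cycC, pathAdj]
        split_ifs <;> simp_all
  rw [hCrw]
  rw [Matrix.det_updateRow_add]
  have e1 : ((pathAdj (m+3)).updateRow 0 (pathAdj (m+3) 0 + (starRingEnd ℂ) W • eL m)).updateRow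
      (Fin.last (m+2)) (pathAdj (m+3) (Fin.last (m+2)))
      = (pathAdj (m+3)).updateRow 0 (pathAdj (m+3) 0 + (starRingEnd ℂ) W • eL m) := by
    conv_lhs => rw [show pathAdj (m+3) (Fin.last (m+2)) = ((pathAdj (m+3)).updateRow 0
      (pathAdj (m+3) 0 + (starRingEnd ℂ) W • eL m)) (Fin.last (m+2)) from
      (Matrix.updateRow_ne h0L).symm]
    exact Matrix.updateRow_eq_self _ _
  rw [e1, Matrix.det_updateRow_add]
  rw [Matrix.updateRow_eq_self, Matrix.det_updateRow_smul, hD2]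
  rw [updRow_comm, Matrix.det_updateRow_add]
  have e2 : ((pathAdj (m+3)).updateRow (Fin.last (m+2)) (W • e0 m)).updateRow 0 (pathAdj (m+3) 0)
      = (pathAdj (m+3)).updateRow (Fin.last (m+2)) (W • e0 m) := by
    conv_lhs => rw [show pathAdj (m+3) 0
      = ((pathAdj (m+3)).updateRow (Fin.last (m+2)) (W • e0 m)) 0
      from (Matrix.updateRow_ne h0L.symm).symm]
    exact Matrix.updateRow_eq_self _ _
  rw [e2]
  have t1 : ((pathAdj (m+3)).updateRow (Fin.last (m+2)) (W • e0 m)).det = W * (-1:ℂ)^m := by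
    rw [Matrix.det_updateRow_smul, hD1]
  have t2 : (((pathAdj (m+3)).updateRow (Fin.last (m+2)) (W • e0 m)).updateRow 0
      ((starRingEnd ℂ) W • eL m)).det
      = (starRingEnd ℂ) W * (W * (-(pathAdj (m+1)).det)) := by
    rw [Matrix.det_updateRow_smul, ← updRow_comm, Matrix.det_updateRow_smul, hD3]
  rw [t1, t2]
  have hp3 : (pathAdj (m+3)).det = -(pathAdj (m+1)).det := path_step (m+1)
  rw [hp3]
  linear_combination (-(pathAdj (m+1)).det) * hW

theorem sim (m : ℕ) (w : Fin (m+3) → ℂ) (hw : ∀ j, ‖w j‖ = 1) :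
    (cycleHw (m+3) w).det = (cycC m (∏ j, w j)).det := by
  have hunit : ∀ i, w i * (starRingEnd ℂ) (w i) = 1 := by
    intro i
    rw [Complex.mul_conj, Complex.normSq_eq_norm_sq, hw i]
    norm_num
  set S : Fin (m+3) → Finset (Fin (m+3)) := fun j => Finset.univ.filter (fun i => (i:ℕ) < (j:ℕ))
    with hS
  set d : Fin (m+3) → ℂ := fun j => ∏ i ∈ S j, (starRingEnd ℂ) (w i) with hd
  have hcd : ∀ j, (starRingEnd ℂ) (d j) = ∏ i ∈ S j, w i := by
    intro j; rw [hd]; simp [map_prod]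
  have hprod : ∀ s : Finset (Fin (m+3)), (∏ i ∈ s, w i) * (∏ i ∈ s, (starRingEnd ℂ) (w i)) = 1 := by
    intro s
    rw [← Finset.prod_mul_distrib]
    exact Finset.prod_eq_one (fun i _ => hunit i)
  have hdd : ∀ j, (starRingEnd ℂ) (d j) * d j = 1 := by
    intro j; rw [hcd, hd]; exact hprod _
  have hSins : ∀ j k : Fin (m+3), (k:ℕ) = (j:ℕ)+1 → S k = insert j (S j) := by
    intro j k hk
    ext i
    simp only [hS, Finset.mem_filter, Finset.mem_univ, true_and, Finset.mem_insert, Fin.ext_iff]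
    omega
  have hSnot : ∀ j : Fin (m+3), j ∉ S j := by
    intro j
    simp [hS]
  have f1 : ∀ j k : Fin (m+3), (k:ℕ) = (j:ℕ)+1 →
      (starRingEnd ℂ) (d j) * w j * d k = 1 := by
    intro j k hk
    rw [hcd]
    simp only [hd]
    rw [hSins j k hk, Finset.prod_insert (hSnot j)]
    rw [show (∏ i ∈ S j, w i) * w j * ((starRingEnd ℂ) (w j) * ∏ i ∈ S j, (starRingEnd ℂ) (w i))
      = (w j * (starRingEnd ℂ) (w j)) * ((∏ i ∈ S j, w i) * (∏ i ∈ S j, (starRingEnd ℂ) (w i)))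
      from by ring, hunit j, hprod (S j), one_mul]
  have f3 : ∀ j k : Fin (m+3), (j:ℕ) = (k:ℕ)+1 →
      (starRingEnd ℂ) (d j) * (starRingEnd ℂ) (w k) * d k = 1 := by
    intro j k hj
    rw [hcd]
    simp only [hd]
    rw [hSins k j hj, Finset.prod_insert (hSnot k)]
    rw [show (w k * ∏ i ∈ S k, w i) * (starRingEnd ℂ) (w k) * (∏ i ∈ S k, (starRingEnd ℂ) (w i))
      = (w k * (starRingEnd ℂ) (w k)) * ((∏ i ∈ S k, w i) * (∏ i ∈ S k, (starRingEnd ℂ) (w i)))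
      from by ring, hunit k, hprod (S k), one_mul]
  have hS0 : ∀ k : Fin (m+3), (k:ℕ) = 0 → S k = ∅ := by
    intro k hk
    ext i
    simp only [hS, Finset.mem_filter, Finset.mem_univ, true_and, Finset.notMem_empty, iff_false]
    omega
  have hSuniv : ∀ j : Fin (m+3), (j:ℕ) = m+2 → (Finset.univ : Finset (Fin (m+3))) = insert j (S j) := by
    intro j hj
    ext i
    simp only [hS, Finset.mem_filter, Finset.mem_univ, true_and, Finset.mem_insert, Fin.ext_iff,
      true_iff]
    omega
  have f2 : ∀ j k : Fin (m+3), (j:ℕ) = m+2 → (k:ℕ) = 0 →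
      (starRingEnd ℂ) (d j) * w j * d k = ∏ i, w i := by
    intro j k hj hk
    rw [hcd]
    simp only [hd]
    rw [hS0 k hk, Finset.prod_empty]
    conv_rhs => rw [hSuniv j hj]
    rw [Finset.prod_insert (hSnot j)]
    ring
  have f4 : ∀ j k : Fin (m+3), (j:ℕ) = 0 → (k:ℕ) = m+2 →
      (starRingEnd ℂ) (d j) * (starRingEnd ℂ) (w k) * d k = (starRingEnd ℂ) (∏ i, w i) := by
    intro j k hj hk
    rw [hcd, hS0 j hj, Finset.prod_empty]
    simp only [hd]
    rw [map_prod]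
    conv_rhs => rw [hSuniv k hk]
    rw [Finset.prod_insert (hSnot k)]
    ring
  have key : Matrix.diagonal (fun j => (starRingEnd ℂ) (d j)) * cycleHw (m+3) w * Matrix.diagonal d
      = cycC m (∏ j, w j) := by
    ext j k
    rw [Matrix.mul_diagonal, Matrix.diagonal_mul]
    have hmod : ∀ a : ℕ, a < m+3 → ((a+1) % (m+3)) = if a = m+2 then 0 else a+1 := by
      intro a ha
      split_ifs with h
      · rw [h]
        simp [Nat.mod_self]
      · exact Nat.mod_eq_of_lt (by omega)
    have hj := j.isLt
    have hk := k.isLt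
    simp only [cycleHw, cycC, pathAdj, hmod _ hj, hmod _ hk]
    split_ifs <;>
      first
        | (exfalso; omega)
        | (simp only [add_zero, zero_add, mul_zero, zero_mul] <;>
           first
             | rfl
             | exact f1 j k (by omega)
             | exact f2 j k (by omega) (by omega)
             | exact f3 j k (by omega)
             | exact f4 j k (by omega) (by omega))
  have hdet := congrArg Matrix.det key
  rw [Matrix.det_mul, Matrix.det_mul, Matrix.det_diagonal, Matrix.det_diagonal] at hdet
  have hone : (∏ j, (starRingEnd ℂ) (d j)) * (∏ j, d j) = 1 := by
    rw [← Finset.prod_mul_distrib]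
    exact Finset.prod_eq_one (fun i _ => hdd i)
  calc (cycleHw (m+3) w).det
      = ((∏ j, (starRingEnd ℂ) (d j)) * (∏ j, d j)) * (cycleHw (m+3) w).det := by rw [hone, one_mul]
    _ = (∏ j, (starRingEnd ℂ) (d j)) * (cycleHw (m+3) w).det * (∏ j, d j) := by ring
    _ = (cycC m (∏ j, w j)).det := hdet

/-- The determinant of the Hermitian adjacency matrix of a weighted oriented cycle with
modulus-one weights `w j`: `det H = -2 det A(P_{n-2}) + 2 (-1)^{n+1} Re(∏ w)`. -/
theorem det_weighted_cycle (n : ℕ) (hn : 3 ≤ n) (w : Fin n → ℂ)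
    (hw : ∀ j, ‖w j‖ = 1) :
    (cycleHw n w).det =
      -2 * (pathAdj (n - 2)).det + 2 * (-1 : ℂ) ^ (n + 1) * ((∏ j, w j).re : ℂ) := by
  obtain ⟨m, rfl⟩ : ∃ m, n = m + 3 := ⟨n - 3, by omega⟩
  have hWabs : ‖∏ j, w j‖ = 1 := by
    rw [norm_prod]
    exact Finset.prod_eq_one (fun i _ => hw i)
  have hW : (starRingEnd ℂ) (∏ j, w j) * (∏ j, w j) = 1 := by
    rw [mul_comm, Complex.mul_conj, Complex.normSq_eq_norm_sq, hWabs]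
    norm_num
  rw [sim m w hw, detC m (∏ j, w j) hW]
  rw [show m + 3 - 2 = m + 1 from rfl]
  rw [Complex.add_conj]
  have hpow : (-1:ℂ)^(m+3+1) = (-1)^m := by
    rw [show m+3+1 = m+4 from rfl, pow_add]
    norm_num
  rw [hpow]
  push_cast
  ring
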